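/- Let A and B be abelian groups, f : A → B, and m ∈ ℕ₀. Then fdeg(f) ≤ m if and only if there exist functions g_1, …, g_{m+1} : A^{m+1} → B with f(∑_{i=1}^{m+1} x_i) = ∑_{i=1}^{m+1} g_i(x_1, …, x_{m+1}) for all x_1, …, x_{m+1} ∈ A, where each g_i does not depend on its i-th argument. -/

import Mathlib

open scoped BigOperators

/-- Action of the integral group ring `ℤ[A]` on functions `A → B`:
`(τ_a * f)(x) = f(x + a)`, extended linearly. -/
noncomputable def groupRingAct {A B : Type*} [AddCommGroup A] [AddCommGroup B]
    (r : AddMonoidAlgebra ℤ A) (f : A → B) : A → B :=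
  fun x => r.coeff.sum fun a z => z • f (x + a)

/-- The augmentation ideal of the group ring `R[A]`. -/
noncomputable def augIdealR (R : Type*) (A : Type*) [CommRing R] [AddCommGroup A] :
    Ideal (AddMonoidAlgebra R A) :=
  Ideal.span {r : AddMonoidAlgebra R A | ∃ a : A, r = AddMonoidAlgebra.single a 1 - 1}

/-- The augmentation ideal of `ℤ[A]`. -/
noncomputable def augIdeal (A : Type*) [AddCommGroup A] : Ideal (AddMonoidAlgebra ℤ A) :=
  augIdealR ℤ A

/-- The functional degree of `f : A → B`: the least `n` with `I^(n+1) * f = 0`,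
where `I` is the augmentation ideal of `ℤ[A]`; `⊤` if there is no such `n`. -/
noncomputable def fdeg {A B : Type*} [AddCommGroup A] [AddCommGroup B] (f : A → B) : ℕ∞ :=
  sInf {N : ℕ∞ | ∃ n : ℕ, N = (n : ℕ∞) ∧
    ∀ r ∈ augIdeal A ^ (n + 1), groupRingAct r f = 0}

/-!
The augmentation ideal is generated by the elements `τ_b - 1`, so `I^(m+1)` kills `f` exactly when
every iterated difference `Δ_{a₀} ⋯ Δ_{aₘ} f` vanishes, where `Δ_b f x = f (x + b) - f x`.
Decompositions are compatible with differences: evaluating a decomposition of `f` in `n + 1`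
variables with the last variable at `b` and at `0` and subtracting gives one of `Δ_b f` in `n`
variables (the last summand cancels, as it ignores the last variable); conversely, decompositions
of all the `Δ_b f` assemble into one of `f` through `f (s + b) = Δ_b f s + f s`. Peeling off the
variables one at a time matches the two conditions.
-/

open AddMonoidAlgebra

section DependsOn

variable {α β : Type*} {n : ℕ}

lemma DependsOn.comp_snoc {g : (Fin (n + 1) → α) → β} {s : Set (Fin (n + 1))}
    (hg : DependsOn g s) (c : α) : DependsOn (fun y => g (Fin.snoc y c)) (Fin.castSucc ⁻¹' s) := by
  intro x y hxy
  apply hg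
  intro j hj
  induction j using Fin.lastCases with
  | last => simp
  | cast k => simpa using hxy k hj

lemma DependsOn.comp_init {g : (Fin n → α) → β} {s : Set (Fin n)} (hg : DependsOn g s) :
    DependsOn (fun x : Fin (n + 1) → α => g (Fin.init x)) (Fin.castSucc '' s) :=
  fun _ _ hxy => hg fun j hj => hxy _ ⟨j, hj, rfl⟩

end DependsOn

section GroupRingAct

variable {A B : Type*} [AddCommGroup A] [AddCommGroup B]

@[simp]
lemma groupRingAct_zero_left (f : A → B) : groupRingAct (0 : AddMonoidAlgebra ℤ A) f = 0 := by
  funext x; simp [groupRingAct]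

lemma groupRingAct_add_left (r s : AddMonoidAlgebra ℤ A) (f : A → B) :
    groupRingAct (r + s) f = groupRingAct r f + groupRingAct s f := by
  funext x
  exact Finsupp.sum_add_index' (fun _ => zero_smul ℤ _) (fun _ _ _ => add_smul _ _ _)

@[simp]
lemma groupRingAct_zero_right (r : AddMonoidAlgebra ℤ A) : groupRingAct r (0 : A → B) = 0 := by
  funext x; simp [groupRingAct]

lemma groupRingAct_add_right (r : AddMonoidAlgebra ℤ A) (g h : A → B) :
    groupRingAct r (g + h) = groupRingAct r g + groupRingAct r h := by
  funext x
  simp [groupRingAct, smul_add, Finsupp.sum_add]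

@[simp]
lemma groupRingAct_single (a : A) (z : ℤ) (f : A → B) :
    groupRingAct (single a z) f = fun x => z • f (x + a) := by
  funext x
  exact Finsupp.sum_single_index (zero_smul ℤ _)

lemma groupRingAct_mul (r s : AddMonoidAlgebra ℤ A) (f : A → B) :
    groupRingAct (r * s) f = groupRingAct r (groupRingAct s f) := by
  induction r using AddMonoidAlgebra.induction_linear with
  | zero => simp
  | add r r' hr hr' => rw [add_mul, groupRingAct_add_left, groupRingAct_add_left, hr, hr']
  | single a z =>
    induction s using AddMonoidAlgebra.induction_linear with
    | zero => simp
    | add s s' hs hs' =>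
      rw [mul_add, groupRingAct_add_left, groupRingAct_add_left, hs, hs', groupRingAct_add_right]
    | single b w => funext x; simp [single_mul_single, mul_smul, add_assoc]

lemma groupRingAct_single_sub_one (b : A) (f : A → B) :
    groupRingAct (single b 1 - 1) f = fun x => f (x + b) - f x := by
  funext x
  have h := congrFun (groupRingAct_add_left (single b 1 - 1) 1 f) x
  rw [sub_add_cancel, one_def] at h
  simp only [groupRingAct_single, Pi.add_apply, one_smul, add_zero] at h
  exact eq_sub_of_add_eq h.symm

def groupRingAnnihilator (f : A → B) : Ideal (AddMonoidAlgebra ℤ A) where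
  carrier := {r | groupRingAct r f = 0}
  zero_mem' := groupRingAct_zero_left f
  add_mem' hr hs := by simp_all [groupRingAct_add_left]
  smul_mem' c r hr := by simp_all [groupRingAct_mul]

lemma augIdealR_pow_le_iff (R : Type*) [CommRing R] (n : ℕ) (J : Ideal (AddMonoidAlgebra R A)) :
    augIdealR R A ^ n ≤ J ↔ ∀ a : Fin n → A, ∏ i, (single (a i) 1 - 1) ∈ J := by
  rw [augIdealR, Ideal.span, Submodule.span_pow, Submodule.span_le]
  constructor
  · intro h a
    refine h (Set.mem_pow.mpr ⟨fun i => ⟨single (a i) 1 - 1, a i, rfl⟩, ?_⟩)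
    simp [List.prod_ofFn]
  · rintro h _ hr
    obtain ⟨g, rfl⟩ := Set.mem_pow.mp hr
    choose a ha using fun i => (g i).2
    simpa [List.prod_ofFn, ha] using h a

lemma fdeg_le_iff (f : A → B) (m : ℕ) :
    fdeg f ≤ m ↔ augIdeal A ^ (m + 1) ≤ groupRingAnnihilator f := by
  constructor
  · intro h
    have hfin : fdeg f ≠ ⊤ := ne_top_of_le_ne_top (ENat.natCast_ne_top m) h
    obtain ⟨n, hn, hkill⟩ : fdeg f ∈ _ :=
      csInf_mem (Set.nonempty_iff_ne_empty.2 fun he => hfin (by rw [fdeg, he, sInf_empty]))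
    rw [hn, Nat.cast_le] at h
    exact fun r hr => hkill r (Ideal.pow_le_pow_right (by omega) hr)
  · exact fun h => sInf_le ⟨m, rfl, h⟩

end GroupRingAct

section Decomposition

variable {A B : Type*} [AddCommMonoid A] [AddCommGroup B]

def HasDecomposition (n : ℕ) (f : A → B) : Prop :=
  ∃ g : Fin n → ((Fin n → A) → B),
    (∀ x : Fin n → A, f (∑ i, x i) = ∑ i, g i x) ∧ ∀ i, DependsOn (g i) {i}ᶜ

lemma hasDecomposition_zero_iff (f : A → B) : HasDecomposition 0 f ↔ f 0 = 0 := by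
  constructor
  · rintro ⟨g, hsum, -⟩
    simpa using hsum Fin.elim0
  · intro h
    exact ⟨Fin.elim0, fun x => by simpa using h, fun i => i.elim0⟩

lemma HasDecomposition.diff {n : ℕ} {f : A → B} (h : HasDecomposition (n + 1) f) (b : A) :
    HasDecomposition n (fun x => f (x + b) - f x) := by
  obtain ⟨g, hsum, hdep⟩ := h
  have hlast (y : Fin n → A) : g (Fin.last n) (Fin.snoc y b) = g (Fin.last n) (Fin.snoc y 0) :=
    hdep _ fun j hj => by obtain ⟨k, rfl⟩ := Fin.exists_castSucc_eq.2 hj; simp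
  refine ⟨fun i y => g i.castSucc (Fin.snoc y b) - g i.castSucc (Fin.snoc y 0), fun y => ?_,
    fun i => ?_⟩
  · have hb := hsum (Fin.snoc y b)
    have h0 := hsum (Fin.snoc y 0)
    simp only [Fin.sum_snoc, add_zero, Fin.sum_univ_castSucc (fun i => g i _)] at hb h0
    dsimp only
    rw [hb, h0, hlast, Finset.sum_sub_distrib]
    abel
  · have hoff : Fin.castSucc ⁻¹' {i.castSucc}ᶜ ⊆ {i}ᶜ := fun k hk h => hk (congrArg _ h)
    exact fun x y hxy => congrArg₂ (· - ·) (((hdep _).comp_snoc b).mono hoff hxy)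
      (((hdep _).comp_snoc 0).mono hoff hxy)

lemma HasDecomposition.of_diff {n : ℕ} {f : A → B}
    (h : ∀ b, HasDecomposition n (fun x => f (x + b) - f x)) : HasDecomposition (n + 1) f := by
  choose G hGsum hGdep using h
  refine ⟨Fin.snoc (α := fun _ => (Fin (n + 1) → A) → B)
    (fun i x => G (x (Fin.last n)) i (Fin.init x)) (fun x => f (∑ i, Fin.init x i)),
    fun x => ?_, fun i => ?_⟩
  · rw [Fin.sum_univ_castSucc, Fin.sum_univ_castSucc]
    simp only [Fin.snoc_castSucc, Fin.snoc_last, ← hGsum, Fin.init]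
    abel
  · induction i using Fin.lastCases with
    | last =>
      simp only [Fin.snoc_last]
      exact (dependsOn_univ fun z : Fin n → A => f (∑ i, z i)).comp_init.mono
        (by rintro _ ⟨j, -, rfl⟩; exact (Fin.castSucc_lt_last j).ne)
    | cast k =>
      intro x y hxy
      simp only [Fin.snoc_castSucc]
      rw [hxy _ (Fin.castSucc_lt_last k).ne']
      exact (hGdep _ k).comp_init.mono (by rintro _ ⟨j, hj, rfl⟩; simpa using hj) hxy

lemma hasDecomposition_succ_iff (n : ℕ) (f : A → B) :
    HasDecomposition (n + 1) f ↔ ∀ b, HasDecomposition n (fun x => f (x + b) - f x) :=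
  ⟨fun h b => h.diff b, .of_diff⟩

end Decomposition

section IteratedDifferences

variable {A B : Type*} [AddCommGroup A] [AddCommGroup B]

lemma hasDecomposition_one_iff (f : A → B) :
    HasDecomposition 1 f ↔ ∀ b, (fun x => f (x + b) - f x) = 0 := by
  simp only [hasDecomposition_succ_iff, hasDecomposition_zero_iff, zero_add, sub_eq_zero,
    funext_iff, Pi.zero_apply]
  exact ⟨fun h b x => (h (x + b)).trans (h x).symm, fun h b => by simpa using h b 0⟩

lemma hasDecomposition_succ_iff_forall_groupRingAct_prod (n : ℕ) (f : A → B) :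
    HasDecomposition (n + 1) f ↔
      ∀ a : Fin (n + 1) → A, groupRingAct (∏ i, (single (a i) 1 - 1)) f = 0 := by
  induction n generalizing f with
  | zero =>
    rw [zero_add, hasDecomposition_one_iff]
    simp only [Fin.prod_univ_one, groupRingAct_single_sub_one]
    exact ⟨fun h a => h (a 0), fun h b => h fun _ => b⟩
  | succ n ih =>
    rw [hasDecomposition_succ_iff]
    refine (forall_congr' fun b => ih _).trans (Iff.trans ?_ Fin.forall_fin_succ_pi.symm)
    refine forall₂_congr fun b v => ?_
    simp only [Fin.prod_univ_succ (n := n + 1), Fin.cons_zero, Fin.cons_succ]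
    rw [mul_comm, groupRingAct_mul, groupRingAct_single_sub_one]

end IteratedDifferences

theorem fdeg_le_iff_decomposition {A B : Type*} [AddCommGroup A] [AddCommGroup B]
    (f : A → B) (m : ℕ) :
    fdeg f ≤ (m : ℕ∞) ↔
      ∃ g : Fin (m + 1) → ((Fin (m + 1) → A) → B),
        (∀ x : Fin (m + 1) → A, f (∑ i : Fin (m + 1), x i) = ∑ i : Fin (m + 1), g i x) ∧
        (∀ i : Fin (m + 1), ∀ x y : Fin (m + 1) → A,
          (∀ j, j ≠ i → x j = y j) → g i x = g i y) := by
  rw [fdeg_le_iff, augIdeal, augIdealR_pow_le_iff]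
  exact (hasDecomposition_succ_iff_forall_groupRingAct_prod m f).symm
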